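/- arXiv:1804.07808 — 3 statements merged into one kernel-verified Lean document; each statement's English description precedes it below -/
import Mathlib

section
/- Let G be sampled from G(n,m,d1,d2) and set n_1 = m, n_2 = n. There exist constants C, c > 0 depending only on d1 and d2 such that the following holds: let H be a subgraph of the complete bipartite graph K_{n,m} with |E(H)| ≤ c·n edges, and let e be an edge of K_{n,m} not in H such that H and H ∪ {e} have the same number of connected components and e shares an endpoint with H whose degree in G is d_i (i.e., that endpoint lies in V_i). Then P( e ∈ E(G) | H ⊆ G ) ≤ (d_i − 1)/n_i + C·|E(H)|/n². -/
/-! Switching. Let `G ⊇ H` be biregular with `e = (a, b) ∈ G`, and let `q = (x, y)` be an edge of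
`G \ H` with `(a, y), (x, b) ∉ G`; trading `e, q` for `(a, y), (x, b)` gives a biregular
`G' ⊇ H`. All but `2 d₁ d₂ + |H|` of the `n d₁` edges of `G` can serve as `q`, and `G` is recovered
from `G'` and its two edges `(a, y), (x, b)` outside `H`, of which there are at most
`(d₁ - 1) d₂` choices if `a` meets `H` (resp. `d₁ (d₂ - 1)` if `b` does). Double counting gives
`P(e ∈ G | H ⊆ G) ≤ D / (n d₁ - 2 d₁ d₂ - |H|)`, and `D / (n d₁)` is the main term
`(d₁ - 1) / m` resp. `(d₂ - 1) / n`. -/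

/-- The set of simple bipartite graphs on parts `Fin n` and `Fin m` in which every
left vertex has degree `d1` and every right vertex has degree `d2`. -/
abbrev BBGraph (n m d1 d2 : ℕ) :=
  {E : Finset (Fin n × Fin m) //
    (∀ i : Fin n, (E.filter fun p => p.1 = i).card = d1) ∧
    (∀ j : Fin m, (E.filter fun p => p.2 = j).card = d2)}

/-- Conditional probability `P(p | q)` under the uniform distribution on a finite type. -/
noncomputable def CondPr {α : Type*} (p q : α → Prop) : ℝ :=
  (Nat.card {x : α // p x ∧ q x} : ℝ) / (Nat.card {x : α // q x} : ℝ)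

/-- The simple graph on `Fin n ⊕ Fin m` associated with a bipartite edge set
`E ⊆ Fin n × Fin m`. -/
def bipGraph {n m : ℕ} (E : Finset (Fin n × Fin m)) : SimpleGraph (Fin n ⊕ Fin m) where
  Adj u v := (∃ p ∈ E, u = Sum.inl p.1 ∧ v = Sum.inr p.2) ∨
    (∃ p ∈ E, u = Sum.inr p.2 ∧ v = Sum.inl p.1)
  symm := by
    constructor
    intro u v h
    rcases h with ⟨p, hp, rfl, rfl⟩ | ⟨p, hp, rfl, rfl⟩
    · exact Or.inr ⟨p, hp, rfl, rfl⟩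
    · exact Or.inl ⟨p, hp, rfl, rfl⟩
  loopless := by
    constructor
    intro u h
    rcases h with ⟨p, hp, rfl, h⟩ | ⟨p, hp, rfl, h⟩ <;> simp at h

/-- The number of connected components of the subgraph of `K_{n,m}` with edge set `H`
(components of isolated vertices, i.e. vertices not incident to any edge of `H`,
are not counted). -/
noncomputable def ccCount {n m : ℕ} (H : Finset (Fin n × Fin m)) : ℕ :=
  Nat.card (bipGraph H).ConnectedComponent -
    ((n + m) -
      (H.image (fun p => (Sum.inl p.1 : Fin n ⊕ Fin m)) ∪
        H.image (fun p => (Sum.inr p.2 : Fin n ⊕ Fin m))).card)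

open Finset

lemma card_sdiff_le_card_sub_one {α : Type*} [DecidableEq α] {s t : Finset α} {x : α}
    (hs : x ∈ s) (ht : x ∈ t) : #(s \ t) ≤ #s - 1 :=
  (card_le_card fun _ hy => mem_erase.2 ⟨ne_of_mem_of_not_mem ht (mem_sdiff.1 hy).2 |>.symm,
    (mem_sdiff.1 hy).1⟩).trans (card_erase_of_mem hs).le

lemma Nat.cast_div_le_cast_div_of_mul_le {a b L D : ℕ} (hL : 0 < L) (h : a * L ≤ b * D) :
    (a : ℝ) / b ≤ D / L := by
  rcases b.eq_zero_or_pos with rfl | hb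
  · simp only [Nat.cast_zero, div_zero]
    positivity
  rw [div_le_div_iff₀ (by positivity) (by positivity)]
  exact_mod_cast h.trans_eq (mul_comm _ _)

/-- `D / (N - k) - D / N = D k / ((N - k) N)` with `N = n d1 ≥ n` and `N - k ≥ N / 2`. -/
lemma div_sub_le_div_add {n d1 D M K h : ℝ} (hn : 0 < n) (hd1 : 1 ≤ d1) (hD : 0 ≤ D)
    (hDM : D ≤ M) (hK : 0 ≤ K) (hh : 1 ≤ h) (hsmall : 2 * (K + 1) * h ≤ n * d1) :
    D / (n * d1 - (K + h)) ≤ D / (n * d1) + 2 * M * (K + 1) * h / n ^ 2 := by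
  have hnN : n ≤ n * d1 := le_mul_of_one_le_right hn.le hd1
  have hKh : K + h ≤ (K + 1) * h := by nlinarith
  have hL : n * d1 / 2 ≤ n * d1 - (K + h) := by linarith
  have hLpos : 0 < n * d1 - (K + h) := by linarith
  have hsplit : D / (n * d1 - (K + h)) =
      D / (n * d1) + D * (K + h) / ((n * d1 - (K + h)) * (n * d1)) := by
    field_simp
    ring
  rw [hsplit, add_le_add_iff_left]
  calc D * (K + h) / ((n * d1 - (K + h)) * (n * d1))
      ≤ M * ((K + 1) * h) / (n ^ 2 / 2) := by
        refine div_le_div₀ (by nlinarith) (mul_le_mul hDM hKh (by linarith) (by linarith))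
          (by positivity) ?_
        nlinarith
    _ = 2 * M * (K + 1) * h / n ^ 2 := by ring

section

variable {n m d1 d2 : ℕ}

def IsBiregular (d1 d2 : ℕ) (E : Finset (Fin n × Fin m)) : Prop :=
  (∀ i : Fin n, #(E.filter fun p => p.1 = i) = d1) ∧ ∀ j : Fin m, #(E.filter fun p => p.2 = j) = d2

instance : DecidablePred (IsBiregular (n := n) (m := m) d1 d2) := fun _ => by
  unfold IsBiregular; infer_instance

def switch (e q : Fin n × Fin m) (E : Finset (Fin n × Fin m)) : Finset (Fin n × Fin m) :=
  insert (e.1, q.2) (insert (q.1, e.2) ((E.erase e).erase q))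

def switchable (e : Fin n × Fin m) (E : Finset (Fin n × Fin m)) : Finset (Fin n × Fin m) :=
  E.filter fun q => (e.1, q.2) ∉ E ∧ (q.1, e.2) ∉ E

section Switch

variable {e q p : Fin n × Fin m} {E H : Finset (Fin n × Fin m)}

lemma mem_switch :
    p ∈ switch e q E ↔ p = (e.1, q.2) ∨ p = (q.1, e.2) ∨ p ≠ q ∧ p ≠ e ∧ p ∈ E := by
  simp only [switch, mem_insert, mem_erase]

lemma mem_switchable : q ∈ switchable e E ↔ q ∈ E ∧ (e.1, q.2) ∉ E ∧ (q.1, e.2) ∉ E :=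
  mem_filter

lemma ne_of_mem_switchable (he : e ∈ E) (hq : q ∈ switchable e E) : q ≠ e := by
  rintro rfl
  exact (mem_switchable.1 hq).2.1 he

lemma sum_switch_add {M : Type*} [AddCommMonoid M] (f : Fin n × Fin m → M) (he : e ∈ E)
    (hq : q ∈ switchable e E) :
    ∑ p ∈ switch e q E, f p + (f e + f q) = ∑ p ∈ E, f p + (f (e.1, q.2) + f (q.1, e.2)) := by
  obtain ⟨hqE, hfst, hsnd⟩ := mem_switchable.1 hq
  have hqe := ne_of_mem_switchable he hq
  have hne : (e.1, q.2) ≠ (q.1, e.2) := fun h =>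
    hqe (Prod.ext (Prod.mk.inj h).1.symm (Prod.mk.inj h).2)
  rw [switch, sum_insert (by simp [hne, hfst]), sum_insert (by simp [hsnd]),
    ← add_sum_erase E f he, ← add_sum_erase (E.erase e) f (mem_erase.2 ⟨hqe, hqE⟩)]
  abel

lemma isBiregular_switch (hE : IsBiregular d1 d2 E) (he : e ∈ E) (hq : q ∈ switchable e E) :
    IsBiregular d1 d2 (switch e q E) := by
  have sum_eq (g : Fin n × Fin m → ℕ) (hg : g e + g q = g (e.1, q.2) + g (q.1, e.2)) :
      ∑ p ∈ switch e q E, g p = ∑ p ∈ E, g p :=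
    add_right_cancel ((sum_switch_add g he hq).trans (by rw [← hg]))
  refine ⟨fun i => ?_, fun j => ?_⟩
  · rw [card_filter, sum_eq _ rfl, ← card_filter, hE.1 i]
  · rw [card_filter, sum_eq _ (add_comm _ _), ← card_filter, hE.2 j]

lemma switch_switch (he : e ∈ E) (hq : q ∈ switchable e E) :
    switch (e.1, q.2) (q.1, e.2) (switch e q E) = E := by
  obtain ⟨hqE, hfst, hsnd⟩ := mem_switchable.1 hq
  ext p
  simp only [mem_switch]
  grind

lemma subset_switch (hHE : H ⊆ E) (heH : e ∉ H) (hqH : q ∉ H) : H ⊆ switch e q E :=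
  fun _ hp => mem_switch.2 <| Or.inr <| Or.inr
    ⟨ne_of_mem_of_not_mem hp hqH, ne_of_mem_of_not_mem hp heH, hHE hp⟩

end Switch

namespace IsBiregular

variable {E : Finset (Fin n × Fin m)}

lemma card_eq (hE : IsBiregular d1 d2 E) : #E = n * d1 := by
  rw [card_eq_sum_card_fiberwise (f := Prod.fst) (t := univ) fun _ _ => mem_univ _]
  simp [hE.1]

lemma card_filter_snd_adj_le (hE : IsBiregular d1 d2 E) (a : Fin n) :
    #(E.filter fun q => (a, q.2) ∈ E) ≤ d2 * d1 := by
  refine (card_le_mul_card_image (f := Prod.snd) _ d2 fun y _ => ?_).trans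
    (Nat.mul_le_mul_left _ ?_)
  · exact (card_le_card fun q hq => by simp_all).trans (hE.2 y).le
  · refine (card_le_card fun y hy => ?_).trans ((card_image_le (f := Prod.snd)).trans (hE.1 a).le)
    obtain ⟨q, hq, rfl⟩ := mem_image.1 hy
    exact mem_image.2 ⟨_, mem_filter.2 ⟨(mem_filter.1 hq).2, rfl⟩, rfl⟩

lemma card_filter_fst_adj_le (hE : IsBiregular d1 d2 E) (b : Fin m) :
    #(E.filter fun q => (q.1, b) ∈ E) ≤ d1 * d2 := by
  refine (card_le_mul_card_image (f := Prod.fst) _ d1 fun x _ => ?_).trans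
    (Nat.mul_le_mul_left _ ?_)
  · exact (card_le_card fun q hq => by simp_all).trans (hE.1 x).le
  · refine (card_le_card fun x hx => ?_).trans ((card_image_le (f := Prod.fst)).trans (hE.2 b).le)
    obtain ⟨q, hq, rfl⟩ := mem_image.1 hx
    exact mem_image.2 ⟨_, mem_filter.2 ⟨(mem_filter.1 hq).2, rfl⟩, rfl⟩

/-- An edge fails to be switchable with `e` only if it lies in `H` or is adjacent to an edge of
`E` at an endpoint of `e`, and there are at most `2 d₁ d₂` of the latter. -/
lemma le_card_switchable (hE : IsBiregular d1 d2 E) (e : Fin n × Fin m)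
    (H : Finset (Fin n × Fin m)) : n * d1 ≤ #(switchable e E \ H) + (2 * d1 * d2 + #H) := by
  have hcover : E ⊆ (switchable e E \ H ∪ E.filter fun q => (e.1, q.2) ∈ E) ∪
      (E.filter fun q => (q.1, e.2) ∈ E) ∪ H := by
    intro q hq
    simp only [mem_union, mem_sdiff, mem_switchable, mem_filter]
    tauto
  have := (card_le_card hcover).trans (card_union_le _ _)
  have := card_union_le (switchable e E \ H ∪ E.filter fun q => (e.1, q.2) ∈ E)
    (E.filter fun q => (q.1, e.2) ∈ E)
  have := card_union_le (switchable e E \ H) (E.filter fun q => (e.1, q.2) ∈ E)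
  have := hE.card_filter_snd_adj_le e.1
  have := hE.card_filter_fst_adj_le e.2
  rw [hE.card_eq] at *
  linarith

end IsBiregular

section Counting

variable {e : Fin n × Fin m} {H : Finset (Fin n × Fin m)}

/-- The switching `(E, q) ↦ switch e q E` is injective once it also records the two new edges,
which lie outside `H` at the endpoints of `e`. -/
lemma card_mul_le_card_mul_of_switching (heH : e ∉ H) (L D : ℕ)
    (hL : ∀ E, IsBiregular d1 d2 E → e ∈ E → H ⊆ E → L ≤ #(switchable e E \ H))
    (hD : ∀ E, IsBiregular d1 d2 E → H ⊆ E →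
      #(E.filter (fun p => p.1 = e.1) \ H) * #(E.filter (fun p => p.2 = e.2) \ H) ≤ D) :
    #(univ.filter fun E => IsBiregular d1 d2 E ∧ e ∈ E ∧ H ⊆ E) * L ≤
      #(univ.filter fun E => IsBiregular d1 d2 E ∧ H ⊆ E) * D := by
  set 𝒜 := univ.filter fun E => IsBiregular d1 d2 E ∧ e ∈ E ∧ H ⊆ E
  set ℬ := univ.filter fun E => IsBiregular d1 d2 E ∧ H ⊆ E
  have h𝒜 {E} : E ∈ 𝒜 ↔ IsBiregular d1 d2 E ∧ e ∈ E ∧ H ⊆ E := by simp [𝒜]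
  have hℬ {E} : E ∈ ℬ ↔ IsBiregular d1 d2 E ∧ H ⊆ E := by simp [ℬ]
  let Φ : (Σ _ : Finset (Fin n × Fin m), Fin n × Fin m) →
      Σ _ : Finset (Fin n × Fin m), (Fin n × Fin m) × (Fin n × Fin m) :=
    fun P => ⟨switch e P.2 P.1, ((e.1, P.2.2), (P.2.1, e.2))⟩
  calc #𝒜 * L
      ≤ #(𝒜.sigma fun E => switchable e E \ H) := by
        rw [card_sigma, ← smul_eq_mul]
        exact card_nsmul_le_sum _ _ _ fun E hE => hL E (h𝒜.1 hE).1 (h𝒜.1 hE).2.1 (h𝒜.1 hE).2.2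
    _ ≤ #(ℬ.sigma fun E => (E.filter (fun p => p.1 = e.1) \ H) ×ˢ
          (E.filter (fun p => p.2 = e.2) \ H)) := by
        refine card_le_card_of_injOn Φ (fun ⟨E, q⟩ hP => ?_) fun ⟨E, q⟩ hP ⟨E', q'⟩ hP' hΦ => ?_
        · simp only [coe_sigma, Set.mem_sigma_iff, mem_coe, mem_sdiff, h𝒜] at hP
          obtain ⟨⟨hE, he, hHE⟩, hq, hqH⟩ := hP
          obtain ⟨-, hfst, hsnd⟩ := mem_switchable.1 hq
          simp only [Φ, coe_sigma, Set.mem_sigma_iff, mem_coe, hℬ, mem_product, mem_sdiff,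
            mem_filter, mem_switch]
          exact ⟨⟨isBiregular_switch hE he hq, subset_switch hHE heH hqH⟩,
            ⟨by simp, fun h => hfst (hHE h)⟩, ⟨by simp, fun h => hsnd (hHE h)⟩⟩
        · simp only [coe_sigma, Set.mem_sigma_iff, mem_coe, mem_sdiff, h𝒜] at hP hP'
          simp only [Φ, Sigma.mk.inj_iff, heq_eq_eq, Prod.mk.injEq, true_and, and_true] at hΦ
          obtain ⟨hsw, hy, hx⟩ := hΦ
          obtain rfl : q = q' := Prod.ext hx hy
          rw [← switch_switch hP.1.2.1 hP.2.1, hsw, switch_switch hP'.1.2.1 hP'.2.1]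
    _ ≤ #ℬ * D := by
        rw [card_sigma, ← smul_eq_mul]
        exact sum_le_card_nsmul _ _ _ fun E hE => (card_product _ _).trans_le
          (hD E (hℬ.1 hE).1 (hℬ.1 hE).2)

end Counting

lemma condPr_eq_card_div (P Q : Finset (Fin n × Fin m) → Prop) [DecidablePred P]
    [DecidablePred Q] :
    CondPr (fun G : BBGraph n m d1 d2 => P G.1) (fun G => Q G.1) =
      (#(univ.filter fun E => IsBiregular d1 d2 E ∧ P E ∧ Q E) : ℝ) /
        #(univ.filter fun E => IsBiregular d1 d2 E ∧ Q E) := by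
  have card_eq (R : Finset (Fin n × Fin m) → Prop) [DecidablePred R] :
      Nat.card {G : BBGraph n m d1 d2 // R G.1} =
        #(univ.filter fun E => IsBiregular d1 d2 E ∧ R E) := by
    rw [Nat.card_congr (Equiv.subtypeSubtypeEquivSubtypeInter _ _), Nat.card_eq_fintype_card,
      Fintype.card_subtype]
    rfl
  rw [CondPr, card_eq fun E => P E ∧ Q E, card_eq Q]

lemma condPr_le_div {e : Fin n × Fin m} {H : Finset (Fin n × Fin m)} (heH : e ∉ H)
    (hsmall : 2 * d1 * d2 + #H < n * d1) (D : ℕ)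
    (hD : ∀ E, IsBiregular d1 d2 E → H ⊆ E →
      #(E.filter (fun p => p.1 = e.1) \ H) * #(E.filter (fun p => p.2 = e.2) \ H) ≤ D) :
    CondPr (fun G : BBGraph n m d1 d2 => e ∈ G.1) (fun G => H ⊆ G.1) ≤
      D / ((n * d1 : ℕ) - (2 * d1 * d2 + #H : ℕ) : ℝ) := by
  rw [condPr_eq_card_div (fun E => e ∈ E) (fun E => H ⊆ E), ← Nat.cast_sub hsmall.le]
  refine Nat.cast_div_le_cast_div_of_mul_le (Nat.sub_pos_of_lt hsmall)
    (card_mul_le_card_mul_of_switching heH _ D (fun E hE _ _ => ?_) hD)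
  have := hE.le_card_switchable e H
  omega

lemma condPr_le_of_card_free_le {e : Fin n × Fin m} {H : Finset (Fin n × Fin m)} (hd1 : 0 < d1)
    (heH : e ∉ H) (hH : H.Nonempty) (hsmall : 2 * (2 * d1 * d2 + 1) * #H ≤ n * d1) (D : ℕ)
    (hDM : D ≤ d1 * d2)
    (hD : ∀ E, IsBiregular d1 d2 E → H ⊆ E →
      #(E.filter (fun p => p.1 = e.1) \ H) * #(E.filter (fun p => p.2 = e.2) \ H) ≤ D) :
    CondPr (fun G : BBGraph n m d1 d2 => e ∈ G.1) (fun G => H ⊆ G.1) ≤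
      D / (n * d1 : ℕ) + 2 * (d1 * d2) * (2 * d1 * d2 + 1) * #H / (n : ℝ) ^ 2 := by
  obtain ⟨p, hp⟩ := hH
  have hn : 0 < n := p.1.pos
  have hH1 : 1 ≤ #H := card_pos.2 ⟨p, hp⟩
  refine (condPr_le_div heH (by nlinarith) D hD).trans ?_
  push_cast
  exact div_sub_le_div_add (by exact_mod_cast hn) (by exact_mod_cast hd1) D.cast_nonneg
    (by exact_mod_cast hDM) (by positivity) (by exact_mod_cast hH1) (by exact_mod_cast hsmall)

end

/-- Lemma (edge probabilities given a subgraph, part (i)/(iii)): there are constants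
`C, c > 0` depending only on `d1, d2` such that for every subgraph `H` of `K_{n,m}` with
at most `c·n` edges and every edge `e = (a,b) ∉ H` such that `H` and `H ∪ {e}` have the
same number of connected components, if `e` shares the endpoint `a ∈ V₁` (of degree `d1`
in `G`) with `H`, then `P(e ∈ G | H ⊆ G) ≤ (d1−1)/m + C|E(H)|/n²`, and if it shares the
endpoint `b ∈ V₂` (of degree `d2` in `G`) with `H`, then
`P(e ∈ G | H ⊆ G) ≤ (d2−1)/n + C|E(H)|/n²`. -/
theorem edge_prob_given_subgraph (d1 d2 : ℕ) (hd1 : 0 < d1) (hd2 : 0 < d2) :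
    ∃ C > (0 : ℝ), ∃ c > (0 : ℝ), ∀ n m : ℕ, n * d1 = m * d2 →
      ∀ H : Finset (Fin n × Fin m), (H.card : ℝ) ≤ c * n →
      ∀ (a : Fin n) (b : Fin m), (a, b) ∉ H →
      ccCount (insert (a, b) H) = ccCount H →
      ((∃ p ∈ H, p.1 = a) →
        CondPr (fun G : BBGraph n m d1 d2 => (a, b) ∈ G.1) (fun G => H ⊆ G.1) ≤
          ((d1 : ℝ) - 1) / m + C * H.card / n ^ 2) ∧
      ((∃ p ∈ H, p.2 = b) →
        CondPr (fun G : BBGraph n m d1 d2 => (a, b) ∈ G.1) (fun G => H ⊆ G.1) ≤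
          ((d2 : ℝ) - 1) / n + C * H.card / n ^ 2) := by
  refine ⟨2 * (d1 * d2) * (2 * d1 * d2 + 1), by positivity, d1 / (2 * (2 * d1 * d2 + 1)),
    by positivity, fun n m hnm H hH a b hab _ => ?_⟩
  have hsmall : 2 * (2 * d1 * d2 + 1) * #H ≤ n * d1 := by
    rw [div_mul_eq_mul_div, le_div_iff₀ (by positivity)] at hH
    exact_mod_cast (by linarith : (2 * (2 * d1 * d2 + 1) * #H : ℝ) ≤ n * d1)
  refine ⟨fun ⟨p, hp, hpa⟩ => ?_, fun ⟨p, hp, hpb⟩ => ?_⟩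
  · refine (condPr_le_of_card_free_le hd1 hab ⟨p, hp⟩ hsmall ((d1 - 1) * d2)
      (Nat.mul_le_mul_right _ (Nat.sub_le _ _)) fun E hE hHE => Nat.mul_le_mul ?_ ?_).trans_eq ?_
    · exact (card_sdiff_le_card_sub_one (mem_filter.2 ⟨hHE hp, hpa⟩) hp).trans_eq (by rw [hE.1 a])
    · exact (card_le_card sdiff_subset).trans (hE.2 b).le
    · rw [hnm]
      push_cast [Nat.cast_sub hd1]
      rw [mul_div_mul_right _ _ (by positivity)]
  · refine (condPr_le_of_card_free_le hd1 hab ⟨p, hp⟩ hsmall (d1 * (d2 - 1))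
      (Nat.mul_le_mul_left _ (Nat.sub_le _ _)) fun E hE hHE => Nat.mul_le_mul ?_ ?_).trans_eq ?_
    · exact (card_le_card sdiff_subset).trans (hE.1 a).le
    · exact (card_sdiff_le_card_sub_one (mem_filter.2 ⟨hHE hp, hpb⟩) hp).trans_eq (by rw [hE.2 b])
    · push_cast [Nat.cast_sub hd2]
      rw [mul_comm (d1 : ℝ), mul_div_mul_right _ _ (by positivity)]
end

section
/- Let F be the edge set of a finite connected graph with maximum degree at most d, and let p2(F) be the number of two-paths in F (unordered pairs of distinct edges of F sharing a common vertex). Then there exists an ordering e_{π(1)}, e_{π(2)}, …, e_{π(|F|)} of the edges of F that contains at least ⌈ p2(F)/(6d²) ⌉ good edges, where edge e_{π(j)} is called good if there is exactly one index i ≤ j−1 such that e_{π(i)} shares a vertex with e_{π(j)}. -/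
/-!
Work in the line graph `L` of `G`, whose edges are the two-paths of `G`. Call two two-paths
separated if no edge of one shares a vertex with an edge of the other, and take a maximal family
of pairwise separated two-paths `(e, f)`. The edges meeting `e ∪ f` all touch one of its three
vertices, so there are at most `3d` of them, each lying in at most `2d` two-paths: one member of
the family blocks at most `12 d²` ordered two-paths, and by maximality every two-path is blocked,
so the family has at least `2 p₂ / 12 d²` members. Listing all the `e`'s, then all the `f`'s,
then the remaining edges makes every `f` good, since its only earlier neighbour is its own `e`.
-/

open Finset Function

lemma Function.Embedding.exists_equiv_fin_extend {α : Type*} [Fintype α] {m n : ℕ} (hmn : m ≤ n)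
    (hn : Fintype.card α = n) (f : Fin m ↪ α) :
    ∃ σ : Fin n ≃ α, ∀ i, σ (Fin.castLE hmn i) = f i := by
  obtain ⟨g, hg⟩ := Fin.Embedding.restrictSurjective_of_le_natCard hmn
    (by rw [Nat.card_eq_fintype_card, hn]) f
  refine ⟨Equiv.ofBijective g ((Fintype.bijective_iff_injective_and_card g).2
    ⟨g.injective, by simp [hn]⟩), fun i => ?_⟩
  exact DFunLike.congr_fun hg i

namespace SimpleGraph

variable {α : Type*} {H : SimpleGraph α}

variable (H) in
def Separated (p q : α × α) : Prop :=
  ¬H.Adj p.1 q.1 ∧ ¬H.Adj p.1 q.2 ∧ ¬H.Adj p.2 q.1 ∧ ¬H.Adj p.2 q.2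

lemma Separated.symm {p q : α × α} (h : H.Separated p q) : H.Separated q p :=
  ⟨fun h' => h.1 h'.symm, fun h' => h.2.2.1 h'.symm, fun h' => h.2.1 h'.symm,
    fun h' => h.2.2.2 h'.symm⟩

lemma not_separated_self {p : α × α} (hp : H.Adj p.1 p.2) : ¬H.Separated p p :=
  fun h => h.2.1 hp

variable (H) in
def IsInducedMatching (S : Finset (α × α)) : Prop :=
  (∀ p ∈ S, H.Adj p.1 p.2) ∧ (S : Set (α × α)).Pairwise H.Separated

instance [DecidableRel H.Adj] : DecidableRel H.Separated :=
  fun _ _ => inferInstanceAs (Decidable (_ ∧ _))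

lemma IsInducedMatching.insert [DecidableEq α] {S : Finset (α × α)} (hS : H.IsInducedMatching S)
    {q : α × α} (hq : H.Adj q.1 q.2) (hsep : ∀ p ∈ S, H.Separated p q) :
    H.IsInducedMatching (insert q S) := by
  refine ⟨fun p hp => ?_, ?_⟩
  · rcases mem_insert.1 hp with rfl | hp
    exacts [hq, hS.1 p hp]
  · rw [coe_insert, Set.pairwise_insert]
    exact ⟨hS.2, fun p hp _ => ⟨(hsep p hp).symm, hsep p hp⟩⟩

section Ordering

variable {k : ℕ} {a b : Fin k → α}

lemma injective_append_of_separated (hadj : ∀ i, H.Adj (a i) (b i))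
    (hsep : ∀ i j, i ≠ j → H.Separated (a i, b i) (a j, b j)) : Injective (Fin.append a b) := by
  refine Fin.append_injective_iff.2 ⟨fun i j hij => ?_, fun i j hij => ?_, fun i j hij => ?_⟩
  · by_contra hne
    exact (hsep i j hne).2.1 (hij ▸ hadj j)
  · by_contra hne
    exact (hsep i j hne).2.1 (hij ▸ hadj i)
  · obtain rfl | hne := eq_or_ne i j
    · exact (hadj i).ne hij
    · exact (hsep i j hne).2.2.2 (hij ▸ (hadj i).symm)

variable [DecidableRel H.Adj]

lemma filter_lt_adj_natAdd_eq_singleton {n : ℕ} (hkn : k + k ≤ n) (hadj : ∀ i, H.Adj (a i) (b i))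
    (hsep : ∀ i j, i ≠ j → H.Separated (a i, b i) (a j, b j)) {σ : Fin n → α}
    (hσ : ∀ j, σ (Fin.castLE hkn j) = Fin.append a b j) (i : Fin k) :
    ({j | j < Fin.castLE hkn (Fin.natAdd k i) ∧ H.Adj (σ j) (σ (Fin.castLE hkn (Fin.natAdd k i)))} :
      Finset (Fin n)) = {Fin.castLE hkn (Fin.castAdd k i)} := by
  have hσa : ∀ i, σ (Fin.castLE hkn (Fin.castAdd k i)) = a i :=
    fun i => (hσ _).trans (Fin.append_left a b i)
  have hσb : ∀ i, σ (Fin.castLE hkn (Fin.natAdd k i)) = b i :=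
    fun i => (hσ _).trans (Fin.append_right a b i)
  ext j
  simp only [mem_filter, mem_univ, true_and, mem_singleton, hσb]
  constructor
  · rintro ⟨hlt, hj⟩
    obtain ⟨j, rfl⟩ : ∃ j' : Fin (k + k), Fin.castLE hkn j' = j :=
      ⟨⟨j, by simp [Fin.lt_def] at hlt; omega⟩, rfl⟩
    induction j using Fin.addCases with
    | left m =>
      rw [hσa] at hj
      obtain rfl | hne := eq_or_ne m i
      · rfl
      · exact absurd hj (hsep m i hne).2.1
    | right m =>
      rw [hσb] at hj
      have hne : m ≠ i := by rintro rfl; exact lt_irrefl _ hlt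
      exact absurd hj (hsep m i hne).2.2.2
  · rintro rfl
    exact ⟨by simpa [Fin.lt_def] using i.pos, (hσa i).symm ▸ hadj i⟩

variable [Fintype α]

theorem exists_equiv_card_le_of_separated {n : ℕ} (hn : Fintype.card α = n)
    (hadj : ∀ i, H.Adj (a i) (b i)) (hsep : ∀ i j, i ≠ j → H.Separated (a i, b i) (a j, b j)) :
    ∃ σ : Fin n ≃ α, k ≤ #{j : Fin n | #{i : Fin n | i < j ∧ H.Adj (σ i) (σ j)} = 1} := by
  have hinj := injective_append_of_separated hadj hsep
  have hkn : k + k ≤ n := hn ▸ by simpa using Fintype.card_le_of_injective _ hinj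
  obtain ⟨σ, hσ⟩ := Embedding.exists_equiv_fin_extend hkn hn ⟨_, hinj⟩
  refine ⟨σ, ?_⟩
  calc k = #(univ : Finset (Fin k)) := by simp
    _ ≤ _ := card_le_card_of_injOn (fun i => Fin.castLE hkn (Fin.natAdd k i))
      (fun i _ => mem_filter.2 ⟨mem_univ _, by
        rw [filter_lt_adj_natAdd_eq_singleton hkn hadj hsep hσ i, card_singleton]⟩)
      ((Fin.castLE_injective hkn).comp (Fin.natAdd_injective k k)).injOn

theorem IsInducedMatching.exists_equiv_card_le {S : Finset (α × α)} (hS : H.IsInducedMatching S)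
    {n : ℕ} (hn : Fintype.card α = n) :
    ∃ σ : Fin n ≃ α, #S ≤ #{j : Fin n | #{i : Fin n | i < j ∧ H.Adj (σ i) (σ j)} = 1} := by
  set e := S.equivFin.symm
  exact exists_equiv_card_le_of_separated (a := fun i => (e i).1.1) (b := fun i => (e i).1.2) hn
    (fun i => hS.1 _ (e i).2)
    (fun i j hij => hS.2 (e i).2 (e j).2 (Subtype.coe_injective.ne (e.injective.ne hij)))

end Ordering

variable [Fintype α] [DecidableRel H.Adj] [DecidableEq α]

lemma card_adj_fst_mem_le (C : Finset α) {Δ : ℕ} (hΔ : ∀ v, H.degree v ≤ Δ) :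
    #{q : α × α | H.Adj q.1 q.2 ∧ q.1 ∈ C} ≤ #C * Δ := by
  calc #{q : α × α | H.Adj q.1 q.2 ∧ q.1 ∈ C}
      = ∑ v ∈ C, H.degree v := by
        rw [card_eq_sum_card_fiberwise (f := Prod.fst) (t := C)
          fun q hq => (mem_filter.1 hq).2.2]
        refine sum_congr rfl fun v hv => ?_
        rw [← card_neighborFinset_eq_degree]
        refine card_nbij' Prod.snd (Prod.mk v) ?_ (fun w => by simp [hv]) ?_ fun _ _ => rfl <;>
          rintro ⟨a, b⟩ <;> simp +contextual [eq_comm (a := a)]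
    _ ≤ ∑ _v ∈ C, Δ := sum_le_sum fun v _ => hΔ v
    _ = #C * Δ := by rw [sum_const, smul_eq_mul]

lemma card_not_separated_le (p : α × α) {Δ : ℕ} (hΔ : ∀ v, H.degree v ≤ Δ) :
    #{q : α × α | H.Adj q.1 q.2 ∧ ¬H.Separated p q} ≤
      2 * (#(H.neighborFinset p.1 ∪ H.neighborFinset p.2) * Δ) := by
  set C := H.neighborFinset p.1 ∪ H.neighborFinset p.2
  have hswap : #{q : α × α | H.Adj q.1 q.2 ∧ q.2 ∈ C} ≤ #{q : α × α | H.Adj q.1 q.2 ∧ q.1 ∈ C} :=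
    card_le_card_of_injOn Prod.swap (fun q hq => by simpa [H.adj_comm] using hq)
      Prod.swap_injective.injOn
  calc #{q : α × α | H.Adj q.1 q.2 ∧ ¬H.Separated p q}
      ≤ #(({q : α × α | H.Adj q.1 q.2 ∧ q.1 ∈ C} : Finset _) ∪
          ({q : α × α | H.Adj q.1 q.2 ∧ q.2 ∈ C} : Finset _)) := by
        refine card_le_card fun q hq => ?_
        obtain ⟨-, hadj, hns⟩ := mem_filter.1 hq
        simp only [Separated, mem_filter, mem_univ, true_and, mem_union, C, mem_neighborFinset]
          at hns ⊢
        tauto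
    _ ≤ _ := card_union_le _ _
    _ ≤ 2 * (#C * Δ) := by linarith [card_adj_fst_mem_le C hΔ]

theorem exists_isInducedMatching_card_adj_le {M : ℕ}
    (hM : ∀ p : α × α, H.Adj p.1 p.2 → #{q : α × α | H.Adj q.1 q.2 ∧ ¬H.Separated p q} ≤ M) :
    ∃ S, H.IsInducedMatching S ∧ #{q : α × α | H.Adj q.1 q.2} ≤ M * #S := by
  classical
  obtain ⟨S, hS, hmax⟩ := exists_max_image {S : Finset (α × α) | H.IsInducedMatching S} card
    ⟨∅, by simp [IsInducedMatching]⟩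
  rw [mem_filter] at hS
  refine ⟨S, hS.2, ?_⟩
  have hcover : ({q : α × α | H.Adj q.1 q.2} : Finset _) ⊆
      S.biUnion fun p => {q : α × α | H.Adj q.1 q.2 ∧ ¬H.Separated p q} := by
    intro q hq
    rw [mem_filter] at hq
    by_contra hq'
    have hsep : ∀ p ∈ S, H.Separated p q := by
      intro p hp
      by_contra h
      exact hq' (mem_biUnion.2 ⟨p, hp, mem_filter.2 ⟨mem_univ _, hq.2, h⟩⟩)
    have hqS : q ∉ S := fun h => not_separated_self hq.2 (hsep q h)
    have := hmax (insert q S) (mem_filter.2 ⟨mem_univ _, hS.2.insert hq.2 hsep⟩)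
    rw [card_insert_of_notMem hqS] at this
    omega
  calc #{q : α × α | H.Adj q.1 q.2}
      ≤ ∑ p ∈ S, #{q : α × α | H.Adj q.1 q.2 ∧ ¬H.Separated p q} :=
        (card_le_card hcover).trans card_biUnion_le
    _ ≤ ∑ _p ∈ S, M := sum_le_sum fun p hp => hM p (hS.2.1 p hp)
    _ = M * #S := by rw [sum_const, smul_eq_mul, mul_comm]

section LineGraph

variable {V : Type*} [Fintype V] (G : SimpleGraph V) [DecidableRel G.Adj]

/-- Mathlib's `lineGraph`, but on the vertex type `{e // e ∈ G.edgeFinset}` of the statement. -/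
def edgeLineGraph : SimpleGraph {e // e ∈ G.edgeFinset} where
  Adj e f := e ≠ f ∧ ∃ v, v ∈ (e : Sym2 V) ∧ v ∈ (f : Sym2 V)
  symm := ⟨fun _ _ ⟨hne, v, he, hf⟩ => ⟨hne.symm, v, hf, he⟩⟩
  loopless := ⟨fun _ h => h.1 rfl⟩

@[simp]
lemma edgeLineGraph_adj {e f : {e // e ∈ G.edgeFinset}} :
    G.edgeLineGraph.Adj e f ↔ e ≠ f ∧ ∃ v, v ∈ (e : Sym2 V) ∧ v ∈ (f : Sym2 V) :=
  Iff.rfl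

variable [DecidableEq V]

instance : DecidableRel G.edgeLineGraph.Adj :=
  fun _ _ => decidable_of_iff' _ (edgeLineGraph_adj G)

variable {G} {d : ℕ}

lemma card_edges_le_of_forall_exists_mem (hdeg : ∀ v, G.degree v ≤ d) {W : Finset V}
    {T : Finset {e // e ∈ G.edgeFinset}} (hT : ∀ f ∈ T, ∃ w ∈ W, w ∈ (f : Sym2 V)) :
    #T ≤ #W * d := by
  have hsub : T ⊆ W.biUnion fun w => {f | w ∈ (f : Sym2 V)} := fun f hf => by
    obtain ⟨w, hw, hwf⟩ := hT f hf
    exact mem_biUnion.2 ⟨w, hw, mem_filter.2 ⟨mem_univ _, hwf⟩⟩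
  have hinc : ∀ w, #{f : {e // e ∈ G.edgeFinset} | w ∈ (f : Sym2 V)} ≤ d := fun w => by
    refine (card_le_card_of_injOn Subtype.val (fun f hf => ?_) Subtype.val_injective.injOn).trans
      ((card_incidenceFinset_eq_degree G w).trans_le (hdeg w))
    simpa [incidenceSet] using ⟨mem_edgeFinset.1 f.2, (mem_filter.1 hf).2⟩
  calc #T ≤ ∑ w ∈ W, #{f : {e // e ∈ G.edgeFinset} | w ∈ (f : Sym2 V)} :=
        (card_le_card hsub).trans card_biUnion_le
    _ ≤ ∑ _w ∈ W, d := sum_le_sum fun w _ => hinc w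
    _ = #W * d := by rw [sum_const, smul_eq_mul]

lemma degree_edgeLineGraph_le (hdeg : ∀ v, G.degree v ≤ d) (e : {e // e ∈ G.edgeFinset}) :
    G.edgeLineGraph.degree e ≤ 2 * d := by
  obtain ⟨u, v, huv⟩ : ∃ u v, (e : Sym2 V) = s(u, v) :=
    Sym2.inductionOn (f := fun z => ∃ u v, z = s(u, v)) (e : Sym2 V) fun u v => ⟨u, v, rfl⟩
  rw [← card_neighborFinset_eq_degree]
  refine (card_edges_le_of_forall_exists_mem hdeg (W := {u, v}) fun f hf => ?_).trans
    (Nat.mul_le_mul_right d card_le_two)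
  obtain ⟨-, w, hwe, hwf⟩ := (mem_neighborFinset _ _ _).1 hf
  rw [huv, Sym2.mem_iff] at hwe
  exact ⟨w, by simpa using hwe, hwf⟩

lemma card_neighborFinset_union_le (hdeg : ∀ v, G.degree v ≤ d) {e f : {e // e ∈ G.edgeFinset}}
    (hef : G.edgeLineGraph.Adj e f) :
    #(G.edgeLineGraph.neighborFinset e ∪ G.edgeLineGraph.neighborFinset f) ≤ 3 * d := by
  obtain ⟨-, x, hxe, hxf⟩ := hef
  obtain ⟨y, hy⟩ := Sym2.mem_iff_exists.1 hxe
  obtain ⟨z, hz⟩ := Sym2.mem_iff_exists.1 hxf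
  refine (card_edges_le_of_forall_exists_mem hdeg (W := {x, y, z}) fun g hg => ?_).trans
    (Nat.mul_le_mul_right d card_le_three)
  rcases mem_union.1 hg with hg | hg <;> obtain ⟨-, w, hw, hwg⟩ := (mem_neighborFinset _ _ _).1 hg
  · rw [hy, Sym2.mem_iff] at hw
    exact ⟨w, by rcases hw with rfl | rfl <;> simp, hwg⟩
  · rw [hz, Sym2.mem_iff] at hw
    exact ⟨w, by rcases hw with rfl | rfl <;> simp, hwg⟩

lemma card_not_separated_edgeLineGraph_le (hdeg : ∀ v, G.degree v ≤ d)
    (p : {e // e ∈ G.edgeFinset} × {e // e ∈ G.edgeFinset}) (hp : G.edgeLineGraph.Adj p.1 p.2) :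
    #{q | G.edgeLineGraph.Adj q.1 q.2 ∧ ¬G.edgeLineGraph.Separated p q} ≤ 12 * d ^ 2 :=
  calc _ ≤ 2 * (3 * d * (2 * d)) := (card_not_separated_le p (degree_edgeLineGraph_le hdeg)).trans
        (by gcongr; exact card_neighborFinset_union_le hdeg hp)
    _ = 12 * d ^ 2 := by ring

lemma card_adj_edgeLineGraph :
    #{q : {e // e ∈ G.edgeFinset} × {e // e ∈ G.edgeFinset} | G.edgeLineGraph.Adj q.1 q.2} =
      #{q ∈ G.edgeFinset ×ˢ G.edgeFinset | q.1 ≠ q.2 ∧ ∃ v : V, v ∈ q.1 ∧ v ∈ q.2} := by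
  refine card_nbij (fun q => (q.1.1, q.2.1)) (fun q hq => ?_) (fun q _ r _ h => ?_) ?_
  · obtain ⟨-, hne, hv⟩ := mem_filter.1 hq
    exact mem_filter.2 ⟨mem_product.2 ⟨q.1.2, q.2.2⟩, Subtype.coe_injective.ne hne, hv⟩
  · simp only [Prod.mk.injEq] at h
    exact Prod.ext (Subtype.ext h.1) (Subtype.ext h.2)
  · intro q hq
    obtain ⟨hmem, hne, hv⟩ := mem_filter.1 hq
    obtain ⟨h1, h2⟩ := mem_product.1 hmem
    refine ⟨(⟨q.1, h1⟩, ⟨q.2, h2⟩), mem_filter.2 ⟨mem_univ _, fun h => hne ?_, hv⟩, rfl⟩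
    exact congrArg Subtype.val h

end LineGraph

end SimpleGraph

lemma ceil_half_div_six_mul_sq_le {P k d : ℕ} (h : P ≤ 12 * d ^ 2 * k) :
    ⌈((P / 2 : ℕ) : ℚ) / (6 * (d : ℚ) ^ 2)⌉₊ ≤ k := by
  rcases Nat.eq_zero_or_pos d with rfl | hd
  · simp -- division by zero gives `0` in `ℚ`
  rw [Nat.ceil_le, div_le_iff₀ (by positivity)]
  have : P / 2 ≤ 6 * d ^ 2 * k := by
    rw [show 12 * d ^ 2 * k = 2 * (6 * d ^ 2 * k) by ring] at h
    omega
  exact_mod_cast (show P / 2 ≤ k * (6 * d ^ 2) by linarith)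

theorem good_edge_ordering_general {V : Type*} [Fintype V] [DecidableEq V]
    (G : SimpleGraph V) [DecidableRel G.Adj] (d : ℕ)
    (hdeg : ∀ v : V, G.degree v ≤ d) :
    ∃ σ : Fin G.edgeFinset.card ≃ {e : Sym2 V // e ∈ G.edgeFinset},
      ⌈(((((G.edgeFinset ×ˢ G.edgeFinset).filter
              (fun q => q.1 ≠ q.2 ∧ ∃ v : V, v ∈ q.1 ∧ v ∈ q.2)).card / 2 : ℕ)) : ℚ) /
          (6 * (d : ℚ) ^ 2)⌉₊ ≤
        (Finset.univ.filter (fun j : Fin G.edgeFinset.card =>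
          (Finset.univ.filter (fun i : Fin G.edgeFinset.card =>
            i < j ∧ ∃ v : V, v ∈ (σ i : Sym2 V) ∧ v ∈ (σ j : Sym2 V))).card = 1)).card := by
  obtain ⟨S, hS, hcard⟩ := G.edgeLineGraph.exists_isInducedMatching_card_adj_le
    (SimpleGraph.card_not_separated_edgeLineGraph_le hdeg)
  obtain ⟨σ, hσ⟩ := hS.exists_equiv_card_le (Fintype.card_coe G.edgeFinset)
  have hearlier : ∀ j, (univ.filter fun i => i < j ∧ G.edgeLineGraph.Adj (σ i) (σ j)) =
      univ.filter fun i => i < j ∧ ∃ v : V, v ∈ (σ i : Sym2 V) ∧ v ∈ (σ j : Sym2 V) := fun j =>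
    filter_congr fun i _ => and_congr_right fun hij => by simp [σ.injective.ne hij.ne]
  refine ⟨σ, ?_⟩
  simp only [hearlier] at hσ
  exact (ceil_half_div_six_mul_sq_le
    (SimpleGraph.card_adj_edgeLineGraph.symm.trans_le hcard)).trans hσ

/-- Lemma (good-edge ordering): let `F` be the edge set of a finite connected graph with
maximum degree at most `d`, and let `p2` be the number of two-paths of `F` (unordered
pairs of distinct edges sharing a vertex). Then there is an ordering
`σ : Fin |F| ≃ F` of the edges containing at least `⌈p2 / (6d²)⌉` good edges, where the
`j`-th edge is good if exactly one earlier edge shares a vertex with it. -/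
theorem good_edge_ordering {V : Type*} [Fintype V] [DecidableEq V]
    (G : SimpleGraph V) [DecidableRel G.Adj] (d : ℕ)
    (hconn : G.Connected) (hdeg : ∀ v : V, G.degree v ≤ d) :
    ∃ σ : Fin G.edgeFinset.card ≃ {e : Sym2 V // e ∈ G.edgeFinset},
      ⌈(((((G.edgeFinset ×ˢ G.edgeFinset).filter
              (fun q => q.1 ≠ q.2 ∧ ∃ v : V, v ∈ q.1 ∧ v ∈ q.2)).card / 2 : ℕ)) : ℚ) /
          (6 * (d : ℚ) ^ 2)⌉₊ ≤
        (Finset.univ.filter (fun j : Fin G.edgeFinset.card =>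
          (Finset.univ.filter (fun i : Fin G.edgeFinset.card =>
            i < j ∧ ∃ v : V, v ∈ (σ i : Sym2 V) ∧ v ∈ (σ j : Sym2 V))).card = 1)).card :=
  good_edge_ordering_general G d hdeg
end

section
/- Let T and R be complex square matrices of the same size such that Im(T) ⊆ Ker(R) and Im(T*) ⊆ Ker(R). Then every eigenvalue λ of T + R that is not an eigenvalue of T satisfies |λ| ≤ max over nonzero x ∈ Ker(T) of ‖(T+R)x‖ / ‖x‖, where ‖·‖ is the Euclidean norm. -/
open Matrix

/-!
Write `A`, `B` for `T`, `R` acting on `ℂᴺ` and `W = Im A + Im A*`. Then `W ⊆ Ker B` and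
`W⊥ ⊆ Ker A`. Let `P` be the orthogonal projection onto `W⊥` and `(A + B) v = λ v`. Since `A`
maps into `W` and `B` kills `W`, projecting the eigen-equation gives `P (B u) = λ u` for
`u = P v`; and `u ≠ 0`, as otherwise `v ∈ W` would be an eigenvector of `A`. Hence
`|λ| ‖u‖ ≤ ‖B u‖ = ‖(A + B) u‖` with `u ∈ Ker A`.
-/

open Module End LinearMap Submodule

section Projection

variable {𝕜 E : Type*} [RCLike 𝕜] [NormedAddCommGroup E] [InnerProductSpace 𝕜 E]
  (W : Submodule 𝕜 E) [W.HasOrthogonalProjection] {A B : E →ₗ[𝕜] E}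

theorem map_starProjection_orthogonal_of_le_ker (hB : W ≤ ker B) (v : E) :
    B (Wᗮ.starProjection v) = B v := by
  conv_rhs => rw [← W.starProjection_add_starProjection_orthogonal v]
  rw [map_add, hB (W.starProjection_apply_mem v), zero_add]

theorem starProjection_orthogonal_map_eq_smul (hA : range A ≤ W) (hB : W ≤ ker B) {μ : 𝕜}
    {v : E} (hv : (A + B) v = μ • v) :
    Wᗮ.starProjection (B (Wᗮ.starProjection v)) = μ • Wᗮ.starProjection v := by
  have hPA : Wᗮ.starProjection (A v) = 0 :=
    starProjection_orthogonal_apply_eq_zero (hA (mem_range_self A v))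
  rw [map_starProjection_orthogonal_of_le_ker W hB, ← map_smul, ← hv, LinearMap.add_apply, map_add, hPA,
    zero_add]

theorem starProjection_orthogonal_ne_zero_of_hasEigenvector (hB : W ≤ ker B) {μ : 𝕜} {v : E}
    (hv : HasEigenvector (A + B) μ v) (hnev : ¬ HasEigenvalue A μ) :
    Wᗮ.starProjection v ≠ 0 := by
  intro hPv
  have hvW : v ∈ W := by
    rwa [starProjection_apply_eq_zero_iff, orthogonal_orthogonal] at hPv
  have hAv : A v = μ • v := by
    simpa [mem_ker.mp (hB hvW)] using hv.apply_eq_smul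
  exact hnev (hasEigenvalue_of_hasEigenvector ⟨mem_eigenspace_iff.mpr hAv, hv.2⟩)

theorem exists_mem_orthogonal_norm_mul_le (hA : range A ≤ W) (hB : W ≤ ker B) {μ : 𝕜}
    (hev : HasEigenvalue (A + B) μ) (hnev : ¬ HasEigenvalue A μ) :
    ∃ u ∈ Wᗮ, u ≠ 0 ∧ ‖μ‖ * ‖u‖ ≤ ‖B u‖ := by
  obtain ⟨v, hv⟩ := hev.exists_hasEigenvector
  refine ⟨Wᗮ.starProjection v, Wᗮ.starProjection_apply_mem v,
    starProjection_orthogonal_ne_zero_of_hasEigenvector W hB hv hnev, ?_⟩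
  calc ‖μ‖ * ‖Wᗮ.starProjection v‖
      = ‖Wᗮ.starProjection (B (Wᗮ.starProjection v))‖ := by
        rw [starProjection_orthogonal_map_eq_smul W hA hB hv.apply_eq_smul, norm_smul]
    _ ≤ ‖B (Wᗮ.starProjection v)‖ := Wᗮ.norm_starProjection_apply_le _

end Projection

theorem orthogonal_le_ker_of_range_adjoint_le {𝕜 E : Type*} [RCLike 𝕜] [NormedAddCommGroup E]
    [InnerProductSpace 𝕜 E] [FiniteDimensional 𝕜 E] {W : Submodule 𝕜 E} {A : E →ₗ[𝕜] E}
    (h : range A.adjoint ≤ W) : Wᗮ ≤ ker A := by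
  simpa [orthogonal_range] using orthogonal_le h

theorem bddAbove_norm_div_norm {𝕜 E F : Type*} [RCLike 𝕜] [NormedAddCommGroup E]
    [NormedSpace 𝕜 E] [NormedAddCommGroup F] [NormedSpace 𝕜 F] (f : E →L[𝕜] F) (p : E → Prop) :
    BddAbove {c : ℝ | ∃ x : E, x ≠ 0 ∧ p x ∧ c = ‖f x‖ / ‖x‖} := by
  refine ⟨‖f‖, ?_⟩
  rintro _ ⟨x, hx, -, rfl⟩
  exact div_le_of_le_mul₀ (norm_nonneg x) (norm_nonneg f) (f.le_opNorm x)

namespace Matrix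

variable {𝕜 n : Type*} [RCLike 𝕜] [Fintype n] [DecidableEq n]

theorem hasEigenvalue_toEuclideanLin_iff (M : Matrix n n 𝕜) (μ : 𝕜) :
    HasEigenvalue (toEuclideanLin M) μ ↔ HasEigenvalue M.mulVecLin μ := by
  rw [hasEigenvalue_iff_mem_spectrum, hasEigenvalue_iff_mem_spectrum, spectrum_toLpLin,
    ← spectrum_toLin']
  rfl

theorem range_toEuclideanLin_le_ker {M K : Matrix n n 𝕜}
    (h : range M.mulVecLin ≤ ker K.mulVecLin) :
    range (toEuclideanLin M) ≤ ker (toEuclideanLin K) := by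
  rintro _ ⟨x, rfl⟩
  have := h (mem_range_self M.mulVecLin (WithLp.ofLp x))
  simpa [toLpLin_apply] using this

end Matrix

/-- Lemma (eigenvalues after subtracting the leading eigenspace): if `T, R` are complex
square matrices with `Im T ⊆ Ker R` and `Im T* ⊆ Ker R`, then every eigenvalue `λ` of
`T + R` that is not an eigenvalue of `T` satisfies
`|λ| ≤ max_{0 ≠ x ∈ Ker T} ‖(T+R)x‖ / ‖x‖` (Euclidean norms). -/
theorem eigenvalue_bound_on_kernel (N : ℕ) (T R : Matrix (Fin N) (Fin N) ℂ)
    (h1 : LinearMap.range T.mulVecLin ≤ LinearMap.ker R.mulVecLin)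
    (h2 : LinearMap.range Tᴴ.mulVecLin ≤ LinearMap.ker R.mulVecLin)
    (lam : ℂ)
    (hev : Module.End.HasEigenvalue (T + R).mulVecLin lam)
    (hnev : ¬ Module.End.HasEigenvalue T.mulVecLin lam) :
    ‖lam‖ ≤
      sSup {c : ℝ | ∃ x : EuclideanSpace ℂ (Fin N), x ≠ 0 ∧
        T.mulVec ((EuclideanSpace.equiv (Fin N) ℂ) x) = 0 ∧
        c = ‖(EuclideanSpace.equiv (Fin N) ℂ).symm
              ((T + R).mulVec ((EuclideanSpace.equiv (Fin N) ℂ) x))‖ / ‖x‖} := by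
  set A := toEuclideanLin T
  set B := toEuclideanLin R
  have hAdj : toEuclideanLin Tᴴ = A.adjoint := toEuclideanLin_conjTranspose_eq_adjoint T
  have hB : range A ⊔ range A.adjoint ≤ ker B :=
    sup_le (range_toEuclideanLin_le_ker h1) (hAdj ▸ range_toEuclideanLin_le_ker h2)
  rw [← hasEigenvalue_toEuclideanLin_iff, map_add] at hev
  rw [← hasEigenvalue_toEuclideanLin_iff] at hnev
  obtain ⟨u, huW, hu0, hle⟩ := exists_mem_orthogonal_norm_mul_le _ le_sup_left hB hev hnev
  have hAu : A u = 0 := orthogonal_le_ker_of_range_adjoint_le le_sup_right huW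
  have hCu : toEuclideanLin (T + R) u = B u := by
    rw [map_add, LinearMap.add_apply, hAu, zero_add]
  calc ‖lam‖ ≤ ‖B u‖ / ‖u‖ := (le_div_iff₀ (norm_pos_iff.mpr hu0)).mpr hle
    _ ≤ _ := le_csSup (bddAbove_norm_div_norm (toEuclideanLin (T + R)).toContinuousLinearMap _)
      ⟨u, hu0, (congrArg WithLp.ofLp hAu :), by rw [← hCu]; rfl⟩
end
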